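/- arXiv:2505.24425 — 4 statements merged into one kernel-verified Lean document; each statement's English description precedes it below -/
import Mathlib

section
/- If |γⱼ| < 1 for all 1 ≤ j ≤ n, then the Wall polynomial Bₙ has no zeros in the closed unit disk. -/
/-! On the closed unit disk one has `‖Aₙ*(z)‖ < ‖Bₙ(z)‖`, by induction on `n`: the step
`(B, A*) ↦ (B + γ z A*, z A* + γ̄ B)` satisfies the Schur identity
`|B'|² - |A*'|² = (1 - |γ|²) (|B|² - |z|² |A*|²)`, whose right-hand side stays positive when
`|γ| < 1` and `|z| ≤ 1`. In particular `Bₙ(z) ≠ 0`. -/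

open Complex

/-- The Wall polynomials `(Aₙ, Aₙ*, Bₙ, Bₙ*)` associated to a sequence of
Schur parameters `γ`. -/
noncomputable def wall (γ : ℕ → ℂ) : ℕ → (ℂ → ℂ) × (ℂ → ℂ) × (ℂ → ℂ) × (ℂ → ℂ)
  | 0 => (fun _ => γ 0, fun _ => (starRingEnd ℂ) (γ 0), fun _ => 1, fun _ => 1)
  | n + 1 =>
      let A := (wall γ n).1
      let As := (wall γ n).2.1
      let B := (wall γ n).2.2.1
      let Bs := (wall γ n).2.2.2
      (fun z => A z + γ (n+1) * z * Bs z,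
       fun z => z * As z + (starRingEnd ℂ) (γ (n+1)) * B z,
       fun z => B z + γ (n+1) * z * As z,
       fun z => z * Bs z + (starRingEnd ℂ) (γ (n+1)) * A z)

open ComplexConjugate

lemma normSq_add_mul_sub_normSq_mul_add_conj_mul (a b g z : ℂ) :
    normSq (b + g * z * a) - normSq (z * a + conj g * b) =
      (1 - normSq g) * (normSq b - normSq z * normSq a) := by
  simp only [normSq_apply, add_re, add_im, mul_re, mul_im, conj_re, conj_im]
  ring

lemma norm_mul_add_conj_mul_lt_norm_add_mul {a b g z : ℂ} (hg : ‖g‖ < 1) (hz : ‖z‖ ≤ 1)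
    (hab : ‖a‖ < ‖b‖) : ‖z * a + conj g * b‖ < ‖b + g * z * a‖ := by
  have hg' : normSq g < 1 := by
    rw [← Complex.sq_norm]; exact pow_lt_one₀ (norm_nonneg g) hg two_ne_zero
  have hz' : normSq z ≤ 1 := by
    rw [← Complex.sq_norm]; exact pow_le_one₀ (norm_nonneg z) hz
  have hab' : normSq a < normSq b := by
    rw [← Complex.sq_norm, ← Complex.sq_norm]
    exact pow_lt_pow_left₀ hab (norm_nonneg a) two_ne_zero
  have hza : normSq z * normSq a < normSq b :=
    (mul_le_of_le_one_left (normSq_nonneg a) hz').trans_lt hab'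
  have key := normSq_add_mul_sub_normSq_mul_add_conj_mul a b g z
  rw [← sq_lt_sq₀ (norm_nonneg _) (norm_nonneg _), Complex.sq_norm, Complex.sq_norm]
  nlinarith

lemma norm_wall_As_lt_norm_wall_B (γ : ℕ → ℂ) (n : ℕ) (hγ0 : ‖γ 0‖ < 1)
    (hγ : ∀ j, 1 ≤ j → j ≤ n → ‖γ j‖ < 1) {z : ℂ} (hz : ‖z‖ ≤ 1) :
    ‖(wall γ n).2.1 z‖ < ‖(wall γ n).2.2.1 z‖ := by
  induction n with
  | zero => simpa [wall] using hγ0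
  | succ n ih =>
    exact norm_mul_add_conj_mul_lt_norm_add_mul (hγ (n + 1) n.succ_pos le_rfl) hz
      (ih fun j hj hjn => hγ j hj (hjn.trans n.le_succ))

theorem wall_B_nonvanishing (γ : ℕ → ℂ) (n : ℕ)
    (hγ0 : ‖γ 0‖ < 1) (hγ : ∀ j, 1 ≤ j → j ≤ n → ‖γ j‖ < 1) :
    ∀ z : ℂ, ‖z‖ ≤ 1 → (wall γ n).2.2.1 z ≠ 0 := fun _ hz =>
  norm_pos_iff.mp ((norm_nonneg _).trans_lt (norm_wall_As_lt_norm_wall_B γ n hγ0 hγ hz))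
end

section
/- Let P(ξ) be a trigonometric polynomial on 𝕋^d of multi-degree at most n with real coefficients in the real/imaginary basis. Then under the substitution ξ_j = Ψ_{k_j}(t_j) (each Ψ_{k_j} being one of the two rational circle charts Ψ₁, Ψ₂), there exists a real polynomial Q ∈ ℝ[t₁,...,t_d] of total degree at most 2|n|d such that P(Φ(t)) = Q(t)/∏_{j=1}^{d}(1 + t_j²)^{|n|} for all t ∈ [−1,1]^d; consequently P(Φ(t)) > 0 if and only if Q(t) > 0. -/
open Complex Real

/-- Rational (Weierstrass substitution) parametrization of the circle. -/
noncomputable def Psi1 (t : ℝ) : ℂ :=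
  (((1 - t ^ 2) / (1 + t ^ 2) : ℝ) : ℂ) + (((2 * t) / (1 + t ^ 2) : ℝ) : ℂ) * Complex.I

/-!
Since `(1 + t²) Ψ₁(t) = (1 + i t)²`, multiplying a monomial `Φ(t)^α` with `α_j ≤ |n|` by
`∏ (1 + t_j²)^|n|` gives the polynomial `∏ (±(1 + i t_j)²)^α_j (1 + t_j²)^(|n| - α_j)`, of degree
at most `2|n|` in each variable. In the real basis `P ξ = Re ∑ (r_α + i r̃_α) ξ^α`, so `Q` is the
coefficientwise real part of the corresponding complex polynomial, and the denominator is positive.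
-/

open MvPolynomial ComplexConjugate

lemma ofReal_one_add_sq_mul_Psi1 (u : ℝ) :
    (1 + (u : ℂ) ^ 2) * Psi1 u = (1 + I * u) ^ 2 := by
  have h : (1 + (u : ℂ) ^ 2) ≠ 0 := mod_cast (by positivity : (1 + u ^ 2 : ℝ) ≠ 0)
  simp only [Psi1]
  push_cast
  field_simp
  linear_combination -(u : ℂ) ^ 2 * I_sq

lemma ofReal_re_mul_eq (a b : ℝ) (z : ℂ) :
    (((a + b * I) * z).re : ℂ) = a * (conj z + z) / 2 + b * (conj z - z) / (2 * I) := by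
  apply Complex.ext <;> simp [div_re, div_im]; ring

lemma sum_real_basis_eq_ofReal_re {A : Type*} [Fintype A] (r rt : A → ℝ) (m : A → ℂ) :
    ∑ a, ((r a : ℂ) * (conj (m a) + m a) / 2 + (rt a : ℂ) * (conj (m a) - m a) / (2 * I)) =
      ((∑ a, (r a + rt a * I) * m a).re : ℂ) := by
  simp only [re_sum, ofReal_sum, ofReal_re_mul_eq]

namespace MvPolynomial

variable {σ : Type*}

noncomputable def rePart (p : MvPolynomial σ ℂ) : MvPolynomial σ ℝ :=
  ∑ m ∈ p.support, monomial m (p.coeff m).re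

lemma totalDegree_rePart_le (p : MvPolynomial σ ℂ) : p.rePart.totalDegree ≤ p.totalDegree :=
  (totalDegree_finsetSum _ _).trans <| Finset.sup_le fun _ hm =>
    (totalDegree_monomial_le _ _).trans (le_totalDegree hm)

lemma eval_rePart (p : MvPolynomial σ ℂ) (t : σ → ℝ) :
    eval t p.rePart = (eval (fun j => (t j : ℂ)) p).re := by
  rw [rePart, map_sum, eval_eq _ p, re_sum]
  refine Finset.sum_congr rfl fun m _ => ?_
  simp only [eval_monomial, Finsupp.prod, ← ofReal_pow, ← ofReal_prod, re_mul_ofReal]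

lemma totalDegree_C_mul_one_add_C_mul_X_sq_le {R : Type*} [CommSemiring R] [Nontrivial R]
    (a b : R) (i : σ) : (C a * (1 + C b * X i) ^ 2).totalDegree ≤ 2 := by
  refine (totalDegree_mul _ _).trans ?_
  rw [totalDegree_C, zero_add]
  refine (totalDegree_pow _ _).trans ?_
  have : (1 + C b * X i : MvPolynomial σ R).totalDegree ≤ 1 :=
    (totalDegree_add _ _).trans <| max_le (by simp) <|
      (totalDegree_mul _ _).trans (by simp [totalDegree_X])
  omega

lemma totalDegree_one_add_X_sq_le {R : Type*} [CommSemiring R] [Nontrivial R] (i : σ) :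
    (1 + X i ^ 2 : MvPolynomial σ R).totalDegree ≤ 2 :=
  (totalDegree_add _ _).trans <| max_le (by simp) <|
    (totalDegree_pow _ _).trans (by simp [totalDegree_X])

end MvPolynomial

section ChartNumerator

variable {ι : Type*} [Fintype ι]

noncomputable def chartNumerator (ε : ι → ℂ) (N : ℕ) (α : ι → ℕ) : MvPolynomial ι ℂ :=
  ∏ j, (C (ε j) * (1 + C I * X j) ^ 2) ^ α j * (1 + X j ^ 2) ^ (N - α j)

lemma totalDegree_chartNumerator_le (ε : ι → ℂ) {N : ℕ} {α : ι → ℕ} (hα : ∀ j, α j ≤ N) :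
    (chartNumerator ε N α).totalDegree ≤ 2 * N * Fintype.card ι := by
  have hfactor (j : ι) :
      ((C (ε j) * (1 + C I * X j) ^ 2) ^ α j * (1 + X j ^ 2) ^ (N - α j)).totalDegree ≤ 2 * N := by
    refine (totalDegree_mul _ _).trans ?_
    have h₁ := (totalDegree_pow (C (ε j) * (1 + C I * X j) ^ 2) (α j)).trans
      (Nat.mul_le_mul_left (α j) (totalDegree_C_mul_one_add_C_mul_X_sq_le (ε j) I j))
    have h₂ := (totalDegree_pow (1 + X j ^ 2 : MvPolynomial ι ℂ) (N - α j)).trans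
      (Nat.mul_le_mul_left (N - α j) (totalDegree_one_add_X_sq_le j))
    have := hα j
    omega
  unfold chartNumerator
  refine (totalDegree_finsetProd _ _).trans <| (Finset.sum_le_sum fun j _ => hfactor j).trans ?_
  simp [mul_comm]

lemma eval_chartNumerator (ε : ι → ℂ) {N : ℕ} {α : ι → ℕ} (hα : ∀ j, α j ≤ N) (t : ι → ℝ) :
    eval (fun j => (t j : ℂ)) (chartNumerator ε N α) =
      ((∏ j, (1 + t j ^ 2) ^ N : ℝ) : ℂ) * ∏ j, (ε j * Psi1 (t j)) ^ α j := by
  push_cast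
  simp only [chartNumerator, map_prod, ← Finset.prod_mul_distrib]
  refine Finset.prod_congr rfl fun j _ => ?_
  simp only [map_mul, map_pow, map_add, map_one, eval_C, eval_X,
    ← ofReal_one_add_sq_mul_Psi1, mul_pow]
  rw [← Nat.add_sub_of_le (hα j), pow_add, Nat.add_sub_cancel_left]
  ring

lemma exists_chart_numerator {A : Type*} [Fintype A] (c : A → ℂ) (ε : ι → ℂ) {N : ℕ}
    (e : A → ι → ℕ) (he : ∀ a j, e a j ≤ N) :
    ∃ Q : MvPolynomial ι ℂ, Q.totalDegree ≤ 2 * N * Fintype.card ι ∧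
      ∀ t : ι → ℝ, eval (fun j => (t j : ℂ)) Q =
        ((∏ j, (1 + t j ^ 2) ^ N : ℝ) : ℂ) * ∑ a, c a * ∏ j, (ε j * Psi1 (t j)) ^ e a j := by
  refine ⟨∑ a, c a • chartNumerator ε N (e a), ?_, fun t => ?_⟩
  · exact (totalDegree_finsetSum _ _).trans <| Finset.sup_le fun a _ =>
      (totalDegree_smul_le _ _).trans (totalDegree_chartNumerator_le ε (he a))
  · simp only [map_sum, smul_eval, eval_chartNumerator ε (he _), Finset.mul_sum,
      mul_left_comm (c _)]

end ChartNumerator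

theorem trig_polynomial_chart_substitution (d : ℕ) (n : Fin d → ℕ)
    (r rt : ((j : Fin d) → Fin (n j + 1)) → ℝ)
    (k : Fin d → Bool)
    (P : (Fin d → ℂ) → ℂ)
    (hP : ∀ ξ : Fin d → ℂ, P ξ =
      ∑ α : (j : Fin d) → Fin (n j + 1),
        ((r α : ℂ) *
            ((∏ j, (starRingEnd ℂ) (ξ j) ^ (α j : ℕ)) + ∏ j, ξ j ^ (α j : ℕ)) / 2
          + (rt α : ℂ) *
            ((∏ j, (starRingEnd ℂ) (ξ j) ^ (α j : ℕ)) - ∏ j, ξ j ^ (α j : ℕ))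
              / (2 * Complex.I)))
    (Φ : (Fin d → ℝ) → Fin d → ℂ)
    (hΦ : ∀ t j, Φ t j = if k j then Psi1 (t j) else - Psi1 (t j)) :
    ∃ Q : MvPolynomial (Fin d) ℝ,
      Q.totalDegree ≤ 2 * (∑ j, n j) * d ∧
      (∀ t ∈ Set.univ.pi fun _ : Fin d => Set.Icc (-1 : ℝ) 1,
        P (Φ t) =
          ((MvPolynomial.eval t Q / ∏ j, (1 + t j ^ 2) ^ (∑ j, n j) : ℝ) : ℂ)) ∧
      (∀ t ∈ Set.univ.pi fun _ : Fin d => Set.Icc (-1 : ℝ) 1,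
        (0 < (P (Φ t)).re ↔ 0 < MvPolynomial.eval t Q)) := by
  set N := ∑ j, n j
  have hαN (α : (j : Fin d) → Fin (n j + 1)) (j : Fin d) : (α j : ℕ) ≤ N :=
    (Nat.le_of_lt_succ (α j).is_lt).trans
      (Finset.single_le_sum (fun _ _ => Nat.zero_le _) (Finset.mem_univ j))
  have hΦ_eq (t : Fin d → ℝ) : Φ t = fun j => (if k j then 1 else -1) * Psi1 (t j) :=
    funext fun j => by rw [hΦ]; split_ifs <;> simp
  have hP_eq (ξ : Fin d → ℂ) : P ξ = ((∑ α, (r α + rt α * I) * ∏ j, ξ j ^ (α j : ℕ)).re : ℂ) := by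
    simp only [hP, ← sum_real_basis_eq_ofReal_re, map_prod, map_pow]
  obtain ⟨Qc, hdeg, heval⟩ := exists_chart_numerator (fun α => r α + rt α * I)
    (fun j => if k j then 1 else -1) (fun α j => α j) hαN
  have hQ (t : Fin d → ℝ) : eval t (rePart Qc) = (∏ j, (1 + t j ^ 2) ^ N) * (P (Φ t)).re := by
    rw [eval_rePart, heval, re_ofReal_mul, hP_eq, hΦ_eq, ofReal_re]
  refine ⟨rePart Qc, (totalDegree_rePart_le _).trans (by simpa using hdeg), fun t _ => ?_,
    fun t _ => ?_⟩
  · rw [hQ, mul_div_cancel_left₀ _ (by positivity), hP_eq, ofReal_re]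
  · rw [hQ]; exact (mul_pos_iff_of_pos_left (by positivity)).symm
end

section
/- Let Q be a real measurable function on Δ = [−1,1]^d, let g̃ = χ_{{Q>0}} be the characteristic function of its positivity set, and let v ∈ L¹(λ) with 0 ≤ v ≤ 1. Then ∫_Δ (g̃ − v)·Q dλ ≥ Λ_{|Q|}(‖g̃ − v‖_{L¹(λ)}), where Λ_{|Q|}(ε) = inf { ∫ |Q|·w dλ : w ∈ L¹(λ), 0 ≤ w ≤ 1, ∫ w dλ ≥ ε }. -/
open MeasureTheory

/-- The cube `Δ = [-1,1]^d`. -/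
def cubeSet (d : ℕ) : Set (Fin d → ℝ) := Set.univ.pi fun _ : Fin d => Set.Icc (-1 : ℝ) 1

/-- Lewis's functional `Λ_F(ε) = inf { ∫ F w dλ : 0 ≤ w ≤ 1, ∫ w dλ ≥ ε }`. -/
noncomputable def LamF (d : ℕ) (F : (Fin d → ℝ) → ℝ) (ε : ℝ) : ℝ :=
  sInf {x : ℝ | ∃ w : (Fin d → ℝ) → ℝ, Measurable w ∧ (∀ t, 0 ≤ w t ∧ w t ≤ 1) ∧
    ε ≤ (∫ t in cubeSet d, w t) ∧ x = ∫ t in cubeSet d, F t * w t}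

/-!
On `{Q > 0}` the difference `g̃ - v = 1 - v` is nonnegative and on `{Q ≤ 0}` the difference
`g̃ - v = -v` is nonpositive, so `(g̃ - v) Q = |Q| |g̃ - v|` pointwise. Since `|g̃ - v|` takes values
in `[0,1]` and has integral `‖g̃ - v‖₁`, it is an admissible test function for `Λ_{|Q|}`.
-/

theorem measurableSet_cubeSet (d : ℕ) : MeasurableSet (cubeSet d) :=
  MeasurableSet.univ_pi fun _ => measurableSet_Icc

theorem LamF_le_setIntegral_mul {d : ℕ} {F w : (Fin d → ℝ) → ℝ} {ε : ℝ}
    (hF : ∀ t, 0 ≤ F t) (hw : Measurable w) (hw01 : ∀ t, 0 ≤ w t ∧ w t ≤ 1)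
    (hε : ε ≤ ∫ t in cubeSet d, w t) :
    LamF d F ε ≤ ∫ t in cubeSet d, F t * w t := by
  refine csInf_le ⟨0, ?_⟩ ⟨w, hw, hw01, hε, rfl⟩
  rintro _ ⟨u, -, hu01, -, rfl⟩
  exact setIntegral_nonneg (measurableSet_cubeSet d) fun t _ => mul_nonneg (hF t) (hu01 t).1

section PositivityIndicator

variable {α : Type*} {Q v : α → ℝ}

theorem indicator_pos_sub_mul_eq_abs_mul_abs (hv01 : ∀ t, 0 ≤ v t ∧ v t ≤ 1) (t : α) :
    (Set.indicator {t | 0 < Q t} (fun _ => (1 : ℝ)) t - v t) * Q t =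
      |Q t| * |Set.indicator {t | 0 < Q t} (fun _ => (1 : ℝ)) t - v t| := by
  by_cases hQt : 0 < Q t
  · rw [Set.indicator_of_mem (show t ∈ {t | 0 < Q t} from hQt), abs_of_pos hQt,
      abs_of_nonneg (sub_nonneg.2 (hv01 t).2), mul_comm]
  · rw [Set.indicator_of_notMem (show t ∉ {t | 0 < Q t} from hQt),
      abs_of_nonpos (not_lt.1 hQt), abs_of_nonpos (by linarith [(hv01 t).1])]
    ring

theorem abs_indicator_pos_sub_mem_unitInterval (hv01 : ∀ t, 0 ≤ v t ∧ v t ≤ 1) (t : α) :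
    0 ≤ |Set.indicator {t | 0 < Q t} (fun _ => (1 : ℝ)) t - v t| ∧
      |Set.indicator {t | 0 < Q t} (fun _ => (1 : ℝ)) t - v t| ≤ 1 := by
  refine ⟨abs_nonneg _, abs_sub_le_of_nonneg_of_le ?_ ?_ (hv01 t).1 (hv01 t).2⟩
  · exact Set.indicator_nonneg (fun _ _ => zero_le_one) t
  · exact Set.indicator_le_self' (fun _ _ => zero_le_one) t

end PositivityIndicator

theorem shade_versus_characteristic_estimate (d : ℕ) (Q : (Fin d → ℝ) → ℝ)
    (hQ : Measurable Q) (v : (Fin d → ℝ) → ℝ) (hv : Measurable v)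
    (hv01 : ∀ t, 0 ≤ v t ∧ v t ≤ 1) :
    LamF d (fun t => |Q t|)
        (∫ t in cubeSet d, |Set.indicator {t | 0 < Q t} (fun _ => (1:ℝ)) t - v t|)
      ≤ ∫ t in cubeSet d,
          (Set.indicator {t | 0 < Q t} (fun _ => (1:ℝ)) t - v t) * Q t := by
  have hg : Measurable (Set.indicator {t | 0 < Q t} fun _ => (1 : ℝ)) :=
    measurable_const.indicator (measurableSet_lt measurable_const hQ)
  simp_rw [indicator_pos_sub_mul_eq_abs_mul_abs hv01]
  exact LamF_le_setIntegral_mul (fun t => abs_nonneg (Q t)) (hg.sub hv).abs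
    (abs_indicator_pos_sub_mem_unitInterval hv01) le_rfl
end

section
/- For λ ∈ [0, 1/4], the function f_λ(z₁, z₂) = z₁ + λ·z₂² maps the open Euclidean unit ball 𝔹₂ ⊂ ℂ² into the closed unit disk and sup_{z ∈ 𝔹₂} |f_λ(z)| = 1. -/
theorem norm_add_mul_sq_le_one {R : Type*} [SeminormedRing R] {c z₁ z₂ : R} (hc : ‖c‖ ≤ 1 / 4)
    (hz : ‖z₁‖ ^ 2 + ‖z₂‖ ^ 2 ≤ 1) : ‖z₁ + c * z₂ ^ 2‖ ≤ 1 := by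
  have hz₁ : ‖z₁‖ ≤ 1 := by nlinarith [norm_nonneg z₁, sq_nonneg ‖z₂‖]
  calc ‖z₁ + c * z₂ ^ 2‖ ≤ ‖z₁‖ + ‖c‖ * ‖z₂ ^ 2‖ :=
        (norm_add_le _ _).trans (by gcongr; exact norm_mul_le _ _)
    _ ≤ ‖z₁‖ + ‖c‖ * ‖z₂‖ ^ 2 := by gcongr; exact norm_pow_le' _ two_pos
    _ ≤ ‖z₁‖ + 1 / 4 * (1 - ‖z₁‖ ^ 2) := by gcongr; linarith
    -- `a + (1 - a²)/4 ≤ 1` is `(1 - a)(3 - a) ≥ 0`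
    _ ≤ 1 := by nlinarith

theorem ball_extremal_family (lam : ℝ) (h0 : 0 ≤ lam) (h1 : lam ≤ 1/4) :
    (∀ z₁ z₂ : ℂ, ‖z₁‖ ^ 2 + ‖z₂‖ ^ 2 < 1 →
      ‖z₁ + (lam : ℂ) * z₂ ^ 2‖ ≤ 1) ∧
    sSup {x : ℝ | ∃ z₁ z₂ : ℂ, ‖z₁‖ ^ 2 + ‖z₂‖ ^ 2 < 1 ∧
        x = ‖z₁ + (lam : ℂ) * z₂ ^ 2‖} = 1 := by
  have hlam : ‖(lam : ℂ)‖ ≤ 1 / 4 := by rwa [Complex.norm_real, Real.norm_of_nonneg h0]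
  have hbound : ∀ z₁ z₂ : ℂ, ‖z₁‖ ^ 2 + ‖z₂‖ ^ 2 < 1 → ‖z₁ + (lam : ℂ) * z₂ ^ 2‖ ≤ 1 :=
    fun _ _ hz => norm_add_mul_sq_le_one hlam hz.le
  refine ⟨hbound, csSup_eq_of_forall_le_of_forall_lt_exists_gt ⟨0, 0, 0, by simp⟩ ?_ ?_⟩
  · rintro x ⟨z₁, z₂, hz, rfl⟩
    exact hbound z₁ z₂ hz
  · intro w hw
    obtain ⟨r, hwr, hr1⟩ := exists_between (max_lt hw one_pos)
    have hr0 : 0 ≤ r := (le_max_right w 0).trans hwr.le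
    have hnorm : ‖(r : ℂ)‖ = r := by rw [Complex.norm_real, Real.norm_of_nonneg hr0]
    refine ⟨r, ⟨r, 0, ?_, ?_⟩, (le_max_left w 0).trans_lt hwr⟩
    · rw [hnorm, norm_zero]; nlinarith
    · simp [abs_of_nonneg hr0]
end
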